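/- arXiv:2112.08765 — 8 statements merged into one kernel-verified Lean document; each statement's English description precedes it below -/
import Mathlib

section
/- Let f, g be relation-transformers on a type X with f and g monotone. If f is g-compatible, then f is g-sound via f^ω; that is, f^ω is expansive and for every relation R, R ⊆ g(f(R)) implies f^ω(R) ⊆ g(f^ω(R)). -/
/-- A relation on `X`, as a set of pairs. -/
abbrev Rel' (X : Type*) := Set (X × X)

/-- A relation-transformer is monotone if `R ⊆ S` implies `f R ⊆ f S`. -/
def Mono {X : Type*} (f : Rel' X → Rel' X) : Prop :=
  ∀ ⦃R S : Rel' X⦄, R ⊆ S → f R ⊆ f S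

/-- A relation-transformer is expansive if `R ⊆ f R` for all `R`. -/
def Expansive {X : Type*} (f : Rel' X → Rel' X) : Prop :=
  ∀ R : Rel' X, R ⊆ f R

/-- A relation-transformer is idempotent if `f ∘ f = f`. -/
def Idem {X : Type*} (f : Rel' X → Rel' X) : Prop :=
  f ∘ f = f

/-- `f` is `g`-compatible if `f ∘ g ⊆ g ∘ f` (pointwise). -/
def Compat {X : Type*} (f g : Rel' X → Rel' X) : Prop :=
  ∀ R : Rel' X, f (g R) ⊆ g (f R)

/-- `f` is `g,h`-compatible (i.e. `h`-compatible with `g`) if `f ∘ (g ∩ h) ⊆ h ∘ f`. -/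
def CompatWith {X : Type*} (f g h : Rel' X → Rel' X) : Prop :=
  ∀ R : Rel' X, f (g R ∩ h R) ⊆ h (f R)

/-- `f` is `g`-compatible up to `f'` if `f'` is expansive and `f ∘ g ⊆ g ∘ f' ∘ f`. -/
def CompatUpTo {X : Type*} (f g f' : Rel' X → Rel' X) : Prop :=
  Expansive f' ∧ ∀ R : Rel' X, f (g R) ⊆ g (f' (f R))

/-- `f` is `g,h`-compatible up to `f'` if `f'` is expansive and
`f ∘ (g ∩ h) ⊆ h ∘ f' ∘ f`. -/
def CompatWithUpTo {X : Type*} (f g h f' : Rel' X → Rel' X) : Prop :=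
  Expansive f' ∧ ∀ R : Rel' X, f (g R ∩ h R) ⊆ h (f' (f R))

/-- `f^ω (R) = ⋃ n, f^n (R)`. -/
def omegaIter {X : Type*} (f : Rel' X → Rel' X) : Rel' X → Rel' X :=
  fun R => ⋃ n : ℕ, f^[n] R

/-- `f` is `g`-sound via `f'` if `f'` is expansive and, for every relation `R`,
`R ⊆ g (f R)` implies `f' R ⊆ g (f' R)`. -/
def SoundVia {X : Type*} (f g f' : Rel' X → Rel' X) : Prop :=
  Expansive f' ∧ ∀ R : Rel' X, R ⊆ g (f R) → f' R ⊆ g (f' R)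

/-- If `f` and `g` are monotone and `f` is `g`-compatible, then `f` is `g`-sound
via `f^ω`. -/
theorem stmt2 {X : Type*} (f g : Rel' X → Rel' X)
    (hf : Mono f) (hg : Mono g) (hc : Compat f g) :
    SoundVia f g (omegaIter f) := by
  constructor
  · intro R x hx
    exact Set.mem_iUnion.2 ⟨0, hx⟩
  · intro R hR
    have key : ∀ n, f^[n] R ⊆ g (f^[n+1] R) := by
      intro n
      induction n with
      | zero => simpa using hR
      | succ n ih =>
        rw [Function.iterate_succ_apply']
        calc f (f^[n] R) ⊆ f (g (f^[n+1] R)) := hf ih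
          _ ⊆ g (f (f^[n+1] R)) := hc _
          _ = g (f^[n+1+1] R) := by rw [Function.iterate_succ_apply' f (n+1)]
    intro x hx
    obtain ⟨n, hn⟩ := Set.mem_iUnion.1 hx
    exact hg (fun y hy => Set.mem_iUnion.2 ⟨n+1, hy⟩) (key n hn)
end

section
/- Let f, f', g be relation-transformers on a type X. If f' is idempotent, monotone, expansive and g-compatible, and f is g-compatible up to f', then the composite f' ∘ f is g-compatible. -/
/-- If `f'` is idempotent, monotone, expansive and `g`-compatible, and `f` is
`g`-compatible up to `f'`, then `f' ∘ f` is `g`-compatible. -/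
theorem stmt3 {X : Type*} (f f' g : Rel' X → Rel' X)
    (hidem : Idem f') (hmono : Mono f') (hexp : Expansive f')
    (hc' : Compat f' g) (hupto : CompatUpTo f g f') :
    Compat (f' ∘ f) g := by
  intro R
  have h1 : f' (f (g R)) ⊆ f' (g (f' (f R))) := hmono (hupto.2 R)
  have h2 : f' (g (f' (f R))) ⊆ g (f' (f' (f R))) := hc' _
  have h3 : f' (f' (f R)) = f' (f R) := congrFun hidem (f R)
  simpa [Function.comp, h3] using h1.trans h2
end

section
/- Let f1, f2, g, h be relation-transformers on a type X. If f1 and f2 are monotone, g-compatible, and g,h-compatible, then the composite f1 ∘ f2 is g,h-compatible. -/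
/-- If `f1` and `f2` are monotone, `g`-compatible and `g,h`-compatible, then
`f1 ∘ f2` is `g,h`-compatible. -/
theorem stmt7 {X : Type*} (f1 f2 g h : Rel' X → Rel' X)
    (hf1 : Mono f1) (hf2 : Mono f2)
    (hc1 : Compat f1 g) (hc2 : Compat f2 g)
    (hcw1 : CompatWith f1 g h) (hcw2 : CompatWith f2 g h) :
    CompatWith (f1 ∘ f2) g h := by
  intro R x hx
  apply hcw1 (f2 R)
  apply hf1 _ hx
  intro y hy
  exact ⟨hc2 R (hf2 Set.inter_subset_left hy), hcw2 R hy⟩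
end

section
/- Let f, g, h be relation-transformers on a type X. If f and h are monotone, f is g-compatible and f is g,h-compatible, then f^ω is g,h-compatible. -/
/-- If `f` and `h` are monotone, `f` is `g`-compatible and `g,h`-compatible, then
`f^ω` is `g,h`-compatible. -/
theorem stmt9 {X : Type*} (f g h : Rel' X → Rel' X)
    (hf : Mono f) (hh : Mono h)
    (hc : Compat f g) (hcw : CompatWith f g h) :
    CompatWith (omegaIter f) g h := by
  intro R
  have key : ∀ n, f^[n] (g R ∩ h R) ⊆ g (f^[n] R) ∩ h (f^[n] R) := by
    intro n
    induction n with
    | zero => simp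
    | succ n ih =>
      rw [Function.iterate_succ_apply', Function.iterate_succ_apply']
      refine Set.subset_inter ?_ ?_
      · exact (hf ih).trans ((hf Set.inter_subset_left).trans (hc _))
      · exact (hf ih).trans (hcw _)
  intro x hx
  simp only [omegaIter, Set.mem_iUnion] at hx
  obtain ⟨n, hn⟩ := hx
  have := (key n hn).2
  exact hh (Set.subset_iUnion (fun n => f^[n] R) n) this
end

section
/- Let f, g, h be monotone relation-transformers on a type X, and let m ≥ 1. If f is g-compatible and f is g^m,h-compatible, then f is (g ∩ h)-sound via f'^ω where f' = ⋃_{0 ≤ i ≤ m} f^i; that is, f'^ω is expansive and for every relation R, R ⊆ (g ∩ h)(f(R)) implies f'^ω(R) ⊆ (g ∩ h)(f'^ω(R)). -/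
section Aux
variable {X : Type*}

lemma mono_iter {f : Rel' X → Rel' X} (hf : Mono f) (n : ℕ) : Mono (f^[n]) := by
  induction n with
  | zero => intro R S hRS; simpa using hRS
  | succ n ih =>
    intro R S hRS
    simp only [Function.iterate_succ_apply']
    exact hf (ih hRS)

lemma compat_iter_left {f g : Rel' X → Rel' X} (hf : Mono f) (hg : Mono g)
    (hc : ∀ R, f (g R) ⊆ g (f R)) (n : ℕ) (R : Rel' X) :
    f^[n] (g R) ⊆ g (f^[n] R) := by
  induction n with
  | zero => simp
  | succ n ih =>
    simp only [Function.iterate_succ_apply']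
    exact (hf ih).trans (hc _)

lemma compat_iter_right {f g : Rel' X → Rel' X} (hf : Mono f) (hg : Mono g)
    (hc : ∀ R, f (g R) ⊆ g (f R)) (n : ℕ) (R : Rel' X) :
    f (g^[n] R) ⊆ g^[n] (f R) := by
  induction n with
  | zero => simp
  | succ n ih =>
    simp only [Function.iterate_succ_apply']
    exact (hc _).trans (hg ih)

lemma base_iter {f g : Rel' X → Rel' X} (hf : Mono f) (hg : Mono g)
    (hc : ∀ R, f (g R) ⊆ g (f R)) {R : Rel' X} (hR : R ⊆ g (f R)) (k : ℕ) :
    R ⊆ g^[k] (f^[k] R) := by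
  induction k with
  | zero => simp
  | succ k ih =>
    refine ih.trans ?_
    have h1 : f^[k] R ⊆ g (f^[k+1] R) := by
      rw [Function.iterate_succ_apply]
      exact (mono_iter hf k hR).trans (compat_iter_left hf hg hc k (f R))
    calc g^[k] (f^[k] R) ⊆ g^[k] (g (f^[k+1] R)) := mono_iter hg k h1
      _ = g^[k+1] (f^[k+1] R) := (Function.iterate_succ_apply g k _).symm

end Aux

/-- If `f, g, h` are monotone, `m ≥ 1`, `f` is `g`-compatible and
`g^m,h`-compatible, then `f` is `(g ∩ h)`-sound via `f'^ω` where
`f' = ⋃_{0 ≤ i ≤ m} f^i`. -/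

theorem stmt10 {X : Type*} (f g h : Rel' X → Rel' X) (m : ℕ)
    (hf : Mono f) (hg : Mono g) (hh : Mono h) (hm : 1 ≤ m)
    (hc : Compat f g) (hcw : CompatWith f (g^[m]) h) :
    SoundVia f (fun R => g R ∩ h R)
      (omegaIter (fun R => ⋃ i ≤ m, f^[i] R)) := by
  set F : Rel' X → Rel' X := fun R => ⋃ i ≤ m, f^[i] R with hF
  have Fsub : ∀ i ≤ m, ∀ R : Rel' X, f^[i] R ⊆ F R := by
    intro i hi R x hx
    simp only [hF, Set.mem_iUnion]
    exact ⟨i, hi, hx⟩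
  have FMono : Mono F := by
    intro R S hRS x hx
    simp only [hF, Set.mem_iUnion] at hx ⊢
    obtain ⟨i, hi, hx⟩ := hx
    exact ⟨i, hi, mono_iter hf i hRS hx⟩
  -- K transformer
  set K : Rel' X → Rel' X := fun R => g^[m] R ∩ h R with hK
  have KMono : Mono K := fun R S hRS =>
    Set.inter_subset_inter (mono_iter hg m hRS) (hh hRS)
  have fK : ∀ R, f (K R) ⊆ K (f R) := by
    intro R
    refine Set.subset_inter ?_ (hcw R)
    exact (hf (Set.inter_subset_left)).trans (compat_iter_right hf hg hc m R)
  have FK : ∀ R, F (K R) ⊆ K (F R) := by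
    intro R x hx
    simp only [hF, Set.mem_iUnion] at hx
    obtain ⟨i, hi, hx⟩ := hx
    exact KMono (Fsub i hi R) (compat_iter_left hf KMono fK i R hx)
  have FG : ∀ R, F (g R) ⊆ g (F R) := by
    intro R x hx
    simp only [hF, Set.mem_iUnion] at hx
    obtain ⟨i, hi, hx⟩ := hx
    exact hg (Fsub i hi R) (compat_iter_left hf hg hc i R hx)
  constructor
  · intro R x hx
    exact Set.mem_iUnion.2 ⟨0, hx⟩
  · intro R hR
    have hRg : R ⊆ g (f R) := hR.trans Set.inter_subset_left
    have hRh : R ⊆ h (f R) := hR.trans Set.inter_subset_right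
    have hfF : ∀ S : Rel' X, f S ⊆ F S := fun S => Fsub 1 hm S
    have base : R ⊆ g (F R) ∩ K (F R) := by
      refine Set.subset_inter (hRg.trans (hg (hfF R))) (Set.subset_inter ?_ ?_)
      · exact (base_iter hf hg hc hRg m).trans (mono_iter hg m (Fsub m le_rfl R))
      · exact hRh.trans (hh (hfF R))
    have key : ∀ n : ℕ, F^[n] R ⊆ g (F^[n+1] R) ∩ K (F^[n+1] R) := by
      intro n
      induction n with
      | zero => simpa using base
      | succ n ih =>
        have e : F^[n+1] R = F (F^[n] R) := Function.iterate_succ_apply' F n R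
        have h1 : F^[n+1] R ⊆ F (g (F^[n+1] R)) := by
          calc F^[n+1] R = F (F^[n] R) := e
            _ ⊆ F (g (F^[n+1] R)) := FMono (ih.trans Set.inter_subset_left)
        have h2 : F^[n+1] R ⊆ F (K (F^[n+1] R)) := by
          calc F^[n+1] R = F (F^[n] R) := e
            _ ⊆ F (K (F^[n+1] R)) := FMono (ih.trans Set.inter_subset_right)
        refine Set.subset_inter ?_ ?_
        · refine (h1.trans (FG _)).trans (hg ?_)
          rw [Function.iterate_succ_apply' F (n+1) R]
        · refine (h2.trans (FK _)).trans (KMono ?_)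
          rw [Function.iterate_succ_apply' F (n+1) R]
    intro x hx
    obtain ⟨n, hn⟩ := Set.mem_iUnion.1 hx
    have hsub : F^[n+1] R ⊆ omegaIter F R := fun y hy => Set.mem_iUnion.2 ⟨n+1, hy⟩
    obtain ⟨h1, h2, h3⟩ := key n hn
    exact ⟨hg hsub h1, hh hsub h3⟩
end

section
/- Let f, g, h be monotone relation-transformers on a type X, let m ≥ 1, and suppose g ⊆ id (pointwise), f is g-compatible, f is (h ∘ g^m),h-compatible, and for every n ∈ ℕ we have f^n ∘ (⋃_{0 ≤ i ≤ mn+1} f^i) ⊆ ⋃_{i∈ℕ} f^i (pointwise). Then f is (g ∩ h)-sound via f^ω; that is, f^ω is expansive and for every relation R, R ⊆ (g ∩ h)(f(R)) implies f^ω(R) ⊆ (g ∩ h)(f^ω(R)). -/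
/-- If `f, g, h` are monotone, `m ≥ 1`, `g ⊆ id`, `f` is `g`-compatible and
`(h ∘ g^m),h`-compatible, and the technical condition `(⋆)` holds
(`∀ n, f^n ∘ (⋃_{0 ≤ i ≤ mn+1} f^i) ⊆ ⋃_{i} f^i`), then `f` is `(g ∩ h)`-sound
via `f^ω`. -/
theorem stmt15 {X : Type*} (f g h : Rel' X → Rel' X) (m : ℕ)
    (hf : Mono f) (hg : Mono g) (hh : Mono h) (hm : 1 ≤ m)
    (hgid : ∀ R : Rel' X, g R ⊆ R)
    (hc : Compat f g)
    (hcw : CompatWith f (fun R => h (g^[m] R)) h)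
    (hstar : ∀ (n : ℕ) (R : Rel' X),
      f^[n] (⋃ i ≤ m * n + 1, f^[i] R) ⊆ ⋃ i : ℕ, f^[i] R) :
    SoundVia f (fun R => g R ∩ h R) (omegaIter f) := by
  constructor
  · intro R x hx
    exact Set.mem_iUnion.2 ⟨0, hx⟩
  · intro R hR
    have hRg : R ⊆ g (f R) := fun x hx => (hR hx).1
    have hRh : R ⊆ h (f R) := fun x hx => (hR hx).2
    have monoIter : ∀ (φ : Rel' X → Rel' X), Mono φ → ∀ k, Mono (φ^[k]) := by
      intro φ hφ k
      induction k with
      | zero => intro A B hAB; simpa using hAB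
      | succ k ih =>
        intro A B hAB
        rw [Function.iterate_succ_apply', Function.iterate_succ_apply']
        exact hφ (ih hAB)
    have hgiter : ∀ (k : ℕ) (S : Rel' X), g^[k] S ⊆ S := by
      intro k
      induction k with
      | zero => intro S; simp
      | succ k ih =>
        intro S
        rw [Function.iterate_succ_apply']
        exact (hgid _).trans (ih S)
    have pres : ∀ S : Rel' X, S ⊆ g (f S) → f S ⊆ g (f (f S)) :=
      fun S hS => (hf hS).trans (hc _)
    have iterP : ∀ (k : ℕ) (S : Rel' X), S ⊆ g (f S) → S ⊆ g^[k] (f^[k] S) := by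
      intro k
      induction k with
      | zero => intro S _; simp
      | succ k ih =>
        intro S hS
        rw [Function.iterate_succ_apply', Function.iterate_succ_apply]
        exact hS.trans (hg (ih (f S) (pres S hS)))
    set B : Rel' X := R ∪ f R with hB
    have hBP : B ⊆ g (f B) := by
      intro x hx
      rcases hx with hx | hx
      · exact hg (hf Set.subset_union_left) (hRg hx)
      · exact hg (hf Set.subset_union_right) (pres R hRg hx)
    have hPB : ∀ j, f^[j] B ⊆ g (f (f^[j] B)) := by
      intro j
      induction j with
      | zero => simpa using hBP
      | succ j ih =>
        rw [Function.iterate_succ_apply']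
        exact pres _ ih
    have hPR : ∀ j, f^[j] R ⊆ g (f (f^[j] R)) := by
      intro j
      induction j with
      | zero => simpa using hRg
      | succ j ih =>
        rw [Function.iterate_succ_apply']
        exact pres _ ih
    have hBsub : ∀ k, f^[k] B ⊆ ⋃ i : ℕ, f^[i] R := by
      intro k
      have h1 : B ⊆ ⋃ i ≤ m * k + 1, f^[i] R := by
        intro x hx
        rcases hx with hx | hx
        · exact Set.mem_biUnion (Nat.zero_le _) (by simpa using hx)
        · exact Set.mem_biUnion (by omega : 1 ≤ m * k + 1) (by simpa using hx)
      exact (monoIter f hf k h1).trans (hstar k R)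
    have key : ∀ n : ℕ, f^[n] R ⊆ h (f^[n + m * n] B) := by
      intro n
      induction n with
      | zero => simpa using hRh.trans (hh Set.subset_union_right)
      | succ n ih =>
        set T : Rel' X := f^[n + m * n] B with hT
        set W : Rel' X := f^[m] T with hW
        have h1 : f^[n] R ⊆ h (g^[m] W) := ih.trans (hh (iterP m T (hPB _)))
        have h2 : f^[n] R ⊆ h W := h1.trans (hh (hgiter m W))
        have h3 : f^[n + 1] R ⊆ h (f W) := by
          rw [Function.iterate_succ_apply']
          exact (hf (Set.subset_inter h1 h2)).trans (hcw W)
        have h4 : f W = f^[(n + 1) + m * (n + 1)] B := by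
          have he : (n + 1) + m * (n + 1) = (m + (n + m * n)) + 1 := by ring
          rw [hW, hT, ← Function.iterate_add_apply, he, Function.iterate_succ_apply']
        rwa [h4] at h3
    intro x hx
    obtain ⟨n, hn⟩ := Set.mem_iUnion.1 hx
    constructor
    · have : f (f^[n] R) ⊆ omegaIter f R := by
        intro y hy
        exact Set.mem_iUnion.2 ⟨n + 1, by rwa [Function.iterate_succ_apply']⟩
      exact hg this (hPR n hn)
    · exact hh (hBsub (n + m * n)) (key n hn)
end

section
/- Let f, g, h be monotone relation-transformers on a type X and m ≥ 1. If g ⊆ id (pointwise), f is g-compatible, and f is (h ∘ g^m),h-compatible, then for every n ∈ ℕ one has f^n ∘ h ∘ g^{mn} ⊆ h ∘ f^n (pointwise). -/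
/-- If `f, g, h` are monotone, `m ≥ 1`, `g ⊆ id`, `f` is `g`-compatible and
`(h ∘ g^m),h`-compatible, then for every `n`, `f^n ∘ h ∘ g^{mn} ⊆ h ∘ f^n`
pointwise. -/
theorem stmt16 {X : Type*} (f g h : Rel' X → Rel' X) (m : ℕ)
    (hf : Mono f) (hg : Mono g) (hh : Mono h) (hm : 1 ≤ m)
    (hgid : ∀ R : Rel' X, g R ⊆ R)
    (hc : Compat f g)
    (hcw : CompatWith f (fun R => h (g^[m] R)) h) :
    ∀ (n : ℕ) (R : Rel' X), f^[n] (h (g^[m * n] R)) ⊆ h (f^[n] R) := by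
  have hgk : ∀ (k : ℕ) (R : Rel' X), g^[k] R ⊆ R := by
    intro k
    induction k with
    | zero => intro R; simp
    | succ k ih =>
      intro R
      rw [Function.iterate_succ_apply]
      exact (ih (g R)).trans (hgid R)
  have hck : ∀ (k : ℕ) (R : Rel' X), f (g^[k] R) ⊆ g^[k] (f R) := by
    intro k
    induction k with
    | zero => intro R; simp
    | succ k ih =>
      intro R
      rw [Function.iterate_succ_apply', Function.iterate_succ_apply']
      exact (hc _).trans (hg (ih R))
  have hfit : ∀ (k : ℕ) {R S : Rel' X}, R ⊆ S → f^[k] R ⊆ f^[k] S := by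
    intro k
    induction k with
    | zero => intro R S hRS; simpa using hRS
    | succ k ih =>
      intro R S hRS
      rw [Function.iterate_succ_apply]
      exact ih (hf hRS)
  intro n
  induction n with
  | zero => intro R; simp
  | succ n ih =>
    intro R
    rw [Function.iterate_succ_apply]
    have h1 : g^[m * (n + 1)] R = g^[m] (g^[m * n] R) := by
      have : m * (n + 1) = m + m * n := by ring
      rw [this, Function.iterate_add_apply]
    have h2 : f (h (g^[m * (n + 1)] R)) ⊆ h (f (g^[m * n] R)) := by
      refine (hf ?_).trans (hcw (g^[m * n] R))
      intro x hx
      exact ⟨by rw [h1] at hx; exact hx,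
        hh (by rw [h1]; exact hgk m _) hx⟩
    calc f^[n] (f (h (g^[m * (n + 1)] R)))
        ⊆ f^[n] (h (f (g^[m * n] R))) := hfit n h2
      _ ⊆ f^[n] (h (g^[m * n] (f R))) := hfit n (hh (hck _ _))
      _ ⊆ h (f^[n] (f R)) := ih (f R)
      _ = h (f^[n + 1] R) := by rw [Function.iterate_succ_apply]
end

section
/- Let f and g_1, …, g_n (n ≥ 1) be monotone relation-transformers on a type X with f expansive, and suppose g_1 ⊇ g_2 ⊇ … ⊇ g_n (pointwise). If f is g_1-compatible and there exist integers m_1, …, m_{n-1} ≥ 1 such that for each 1 ≤ i ≤ n-1, f is g_i^{m_i},g_{i+1}-compatible, then f is g_n-sound via f^ω; that is, f^ω is expansive and for every relation R, R ⊆ g_n(f(R)) implies f^ω(R) ⊆ g_n(f^ω(R)). -/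
/-- Chaining compatibility-with: if `f` is monotone and expansive, the `g i`
(for `i < n`, `n ≥ 1`) are monotone and form a decreasing chain
`g 0 ⊇ g 1 ⊇ … ⊇ g (n-1)`, `f` is `g 0`-compatible, and there are exponents
`m i ≥ 1` such that `f` is `(g i)^(m i), g (i+1)`-compatible for all
`i + 1 < n`, then `f` is `g (n-1)`-sound via `f^ω`. -/
theorem stmt18 {X : Type*} (f : Rel' X → Rel' X) (n : ℕ) (hn : 1 ≤ n)
    (g : ℕ → (Rel' X → Rel' X))
    (hf : Mono f) (hfexp : Expansive f)
    (hgmono : ∀ i, i < n → Mono (g i))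
    (hchain : ∀ i j, i ≤ j → j < n → ∀ R : Rel' X, g j R ⊆ g i R)
    (hc : Compat f (g 0))
    (m : ℕ → ℕ) (hm : ∀ i, i + 1 < n → 1 ≤ m i)
    (hcw : ∀ i, i + 1 < n → CompatWith f ((g i)^[m i]) (g (i + 1))) :
    SoundVia f (g (n - 1)) (omegaIter f) := by
  constructor
  · intro R x hx
    exact Set.mem_iUnion.2 ⟨0, hx⟩
  · intro R hR
    have hmonoIter : ∀ (h : Rel' X → Rel' X), Mono h → ∀ p, Mono (h^[p]) := by
      intro h hh p
      induction p with
      | zero => intro R S hRS; simpa using hRS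
      | succ p ih =>
        intro R S hRS
        simp only [Function.iterate_succ_apply']
        exact hh (ih hRS)
    have hfle : ∀ (a b : ℕ), a ≤ b → ∀ S : Rel' X, f^[a] S ⊆ f^[b] S := by
      intro a b hab S
      induction b, hab using Nat.le_induction with
      | base => exact subset_rfl
      | succ b hab ih =>
        refine ih.trans ?_
        rw [Function.iterate_succ_apply']
        exact hfexp _
    have Q : ∀ i, i < n → ∀ k, ∃ j, f^[k] R ⊆ g i (f^[j] R) := by
      intro i
      induction i with
      | zero =>
        intro _ k
        have h0 : R ⊆ g 0 (f R) :=
          hR.trans (hchain 0 (n - 1) (Nat.zero_le _) (by omega) _)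
        refine ⟨k + 1, ?_⟩
        have hcomm : ∀ (k : ℕ) (S : Rel' X), f^[k] (g 0 S) ⊆ g 0 (f^[k] S) := by
          intro k S
          induction k with
          | zero => simp
          | succ k ih =>
            rw [Function.iterate_succ_apply', Function.iterate_succ_apply']
            exact (hf ih).trans (hc _)
        calc f^[k] R ⊆ f^[k] (g 0 (f R)) := hmonoIter f hf k h0
          _ ⊆ g 0 (f^[k] (f R)) := hcomm k _
          _ = g 0 (f^[k + 1] R) := by rw [Function.iterate_succ_apply]
      | succ i ih =>
        intro hi k
        have hin : i < n := by omega
        have ihQ := ih hin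
        have Qm : ∀ (p k : ℕ), ∃ j, f^[k] R ⊆ (g i)^[p] (f^[j] R) := by
          intro p
          induction p with
          | zero => intro k; exact ⟨k, by simp⟩
          | succ p ihp =>
            intro k
            obtain ⟨j2, hj2⟩ := ihQ k
            obtain ⟨j, hj⟩ := ihp j2
            refine ⟨j, ?_⟩
            calc f^[k] R ⊆ g i (f^[j2] R) := hj2
              _ ⊆ g i ((g i)^[p] (f^[j] R)) := hgmono i hin hj
              _ = (g i)^[p + 1] (f^[j] R) := (Function.iterate_succ_apply' (g i) p _).symm
        induction k with
        | zero =>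
          refine ⟨1, ?_⟩
          simpa using hR.trans (hchain (i + 1) (n - 1) (by omega) (by omega) _)
        | succ k ihk =>
          obtain ⟨j', hj'⟩ := ihk
          obtain ⟨j, hj⟩ := Qm (m i) k
          set N := max j j' with hN
          have h1 : f^[k] R ⊆ (g i)^[m i] (f^[N] R) :=
            hj.trans (hmonoIter (g i) (hgmono i hin) (m i) (hfle j N (le_max_left _ _) _))
          have h2 : f^[k] R ⊆ g (i + 1) (f^[N] R) :=
            hj'.trans (hgmono (i + 1) hi (hfle j' N (le_max_right _ _) _))
          refine ⟨N + 1, ?_⟩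
          calc f^[k + 1] R = f (f^[k] R) := Function.iterate_succ_apply' f k R
            _ ⊆ f ((g i)^[m i] (f^[N] R) ∩ g (i + 1) (f^[N] R)) :=
                hf (Set.subset_inter h1 h2)
            _ ⊆ g (i + 1) (f (f^[N] R)) := hcw i hi _
            _ = g (i + 1) (f^[N + 1] R) := by rw [Function.iterate_succ_apply']
    intro x hx
    obtain ⟨k, hk⟩ : ∃ k, x ∈ f^[k] R := by
      simpa [omegaIter, Set.mem_iUnion] using hx
    obtain ⟨j, hj⟩ := Q (n - 1) (by omega) k
    refine hgmono (n - 1) (by omega) ?_ (hj hk)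
    intro y hy
    exact Set.mem_iUnion.2 ⟨j, hy⟩
end
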